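/- arXiv:1311.7631 — 2 statements merged into one kernel-verified Lean document; each statement's English description precedes it below -/
import Mathlib

section
/- The expected absorption time of the Moran process with mutant fitness r > 1 on a strongly connected Δ-regular n-vertex digraph is at most n²Δ. -/
/-!
Let `f k = n Δ (x₀ + ⋯ + x_{k-1})` (`potential`), where `x_j = n r⁻ʲ - (1 + r⁻¹ + ⋯ + r⁻⁽ʲ⁻¹⁾)`
(`potentialStep`) satisfies `x₀ = n` and `r x_{j+1} = x_j - r`. From a state `S` with `k` mutants
and total fitness `W = n + (r - 1) k ≤ r n`, each of the `B` edges from `S` to its complement adds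
a mutant at rate `r / (W Δ)`, and each of the edges back, equally many by regularity, removes one
at rate `1 / (W Δ)`. The recursion for `x` makes the expected change of `f |S|` equal to
`-B n r / W ≤ -1`, since `B ≥ 1` by strong connectivity. Hence `f ∘ card` is a supersolution of the
recurrence for `T`, and `f n ≥ 0`. By a maximum principle (from a transient state the chain
reaches a larger state with positive probability), `T ≤ f ∘ card`; in particular
`T {v} ≤ f 1 = n² Δ`.
-/

open Finset

/-- One-step transition probability of the Moran process with mutant fitness
`r` on the digraph `E`: a vertex `u` is chosen proportionally to its fitness,
then a uniformly random out-neighbour `v` of `u` is replaced by a copy of `u`. -/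
noncomputable def moranP {V : Type*} [Fintype V] [DecidableEq V]
    (E : V → V → Prop) [DecidableRel E] (r : ℝ) (S S' : Finset V) : ℝ :=
  ∑ u : V, ∑ v ∈ univ.filter (fun v => E u v),
    if S' = (if u ∈ S then insert v S else S.erase v) then
      (if u ∈ S then r else 1) /
        (((Fintype.card V : ℝ) + (r - 1) * S.card) *
          ((univ.filter (fun w => E u w)).card : ℝ))
    else 0

namespace Rel

variable {α β : Type*} (r : α → β → Prop) [∀ a, DecidablePred (r a)]

lemma card_interedges_eq_sum_left (s : Finset α) (t : Finset β) :
    #(interedges r s t) = ∑ a ∈ s, #{b ∈ t | r a b} := by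
  simp only [interedges, card_filter, sum_product]

lemma card_interedges_eq_sum_right (s : Finset α) (t : Finset β) :
    #(interedges r s t) = ∑ b ∈ t, #{a ∈ s | r a b} := by
  simp only [interedges, card_filter, sum_product_right]

lemma sum_sum_ite_mem_and_mem [Fintype α] [DecidableEq α] [Fintype β] [DecidableEq β]
    (s : Finset α) (t : Finset β) (x : ℝ) :
    ∑ a, ∑ b ∈ {b | r a b}, (if a ∈ s ∧ b ∈ t then x else 0) = #(interedges r s t) * x := by
  rw [card_interedges_eq_sum_left, Nat.cast_sum, sum_mul]
  simp [ite_and, sum_ite_mem, filter_inter]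

lemma card_interedges_add_card_interedges_compl_right [DecidableEq α] [Fintype β]
    [DecidableEq β] (s : Finset α) (t : Finset β) :
    #(interedges r s t) + #(interedges r s tᶜ) = #(interedges r s univ) := by
  rw [← card_union_of_disjoint (interedges_disjoint_right r s disjoint_compl_right)]
  congr 1
  ext ⟨a, b⟩
  simp only [mem_union, mem_interedges_iff, mem_compl, mem_univ, true_and]
  tauto

lemma card_interedges_add_card_interedges_compl_left [Fintype α] [DecidableEq α]
    [DecidableEq β] (s : Finset α) (t : Finset β) :
    #(interedges r s t) + #(interedges r sᶜ t) = #(interedges r univ t) := by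
  rw [← card_union_of_disjoint (interedges_disjoint_left r disjoint_compl_right t)]
  congr 1
  ext ⟨a, b⟩
  simp only [mem_union, mem_interedges_iff, mem_compl, mem_univ, true_and]
  tauto

end Rel

lemma Relation.ReflTransGen.exists_rel_mem_not_mem {α : Type*} {r : α → α → Prop}
    {s : Set α} {a b : α} (h : Relation.ReflTransGen r a b) (ha : a ∈ s) (hb : b ∉ s) :
    ∃ u ∈ s, ∃ v ∉ s, r u v := by
  induction h with
  | refl => exact absurd ha hb
  | @tail c d _ hcd ih =>
    by_cases hc : c ∈ s
    · exact ⟨c, hc, d, hb, hcd⟩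
    · exact ih hc

lemma le_of_forall_le_sum_mul {α : Type*} [Fintype α] (P : α → α → ℝ) (transient : α → Prop)
    (height : α → ℕ) (h : α → ℝ) (c : ℝ)
    (hP : ∀ s, transient s → (∀ t, 0 ≤ P s t) ∧ ∑ t, P s t = 1)
    (hprog : ∀ s, transient s → ∃ t, 0 < P s t ∧ height s < height t)
    (hsub : ∀ s, transient s → h s ≤ ∑ t, P s t * h t)
    (hbdry : ∀ s, ¬ transient s → h s ≤ c) (s : α) : h s ≤ c := by
  by_contra! hs
  obtain ⟨s₀, -, hmax⟩ := exists_max_image univ h ⟨s, mem_univ s⟩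
  -- a maximiser of `h` of largest height: states of greater height lie strictly below it
  obtain ⟨s₁, hs₁, hheight_max⟩ := exists_max_image {t | h t = h s₀} height ⟨s₀, by simp⟩
  rw [mem_filter] at hs₁
  have hint : transient s₁ := by
    by_contra hb
    linarith [hbdry s₁ hb, hmax s (mem_univ s)]
  obtain ⟨t, hPt, hheight_t⟩ := hprog s₁ hint
  have ht : h t < h s₀ := (hmax t (mem_univ t)).lt_of_ne fun heq =>
    (hheight_max t (by simp [heq])).not_gt hheight_t
  have hlt : ∑ u, P s₁ u * h u < ∑ u, P s₁ u * h s₀ :=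
    sum_lt_sum (fun u _ => mul_le_mul_of_nonneg_left (hmax u (mem_univ u)) ((hP s₁ hint).1 u))
      ⟨t, mem_univ t, mul_lt_mul_of_pos_left ht hPt⟩
  rw [← sum_mul, (hP s₁ hint).2, one_mul] at hlt
  linarith [hsub s₁ hint, hs₁.2]

section Potential

variable (r : ℝ) (n Δ : ℕ)

noncomputable def potentialStep (j : ℕ) : ℝ :=
  n * r⁻¹ ^ j - ∑ i ∈ range j, r⁻¹ ^ i

noncomputable def potential (k : ℕ) : ℝ :=
  n * Δ * ∑ j ∈ range k, potentialStep r n j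

variable {r}

lemma potentialStep_succ (hr : r ≠ 0) (j : ℕ) :
    r * potentialStep r n (j + 1) = potentialStep r n j - r := by
  have hcancel (i : ℕ) : r * r⁻¹ ^ (i + 1) = r⁻¹ ^ i := by
    rw [pow_succ', ← mul_assoc, mul_inv_cancel₀ hr, one_mul]
  simp only [potentialStep, sum_range_succ', mul_sub, mul_add, mul_sum, mul_left_comm r,
    hcancel, pow_zero, mul_one]
  ring

lemma potential_succ_sub (k : ℕ) :
    potential r n Δ (k + 1) - potential r n Δ k = n * Δ * potentialStep r n k := by
  simp only [potential, sum_range_succ]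
  ring

@[simp] lemma potential_zero : potential r n Δ 0 = 0 := by simp [potential]

lemma potential_one : potential r n Δ 1 = n ^ 2 * Δ := by
  simp only [potential, potentialStep, sum_range_one, sum_range_zero, pow_zero, mul_one, sub_zero]
  ring

lemma potential_self_nonneg (hr : 0 ≤ r) : 0 ≤ potential r n Δ n := by
  have hgeom_le (j : ℕ) (hj : j ∈ range n) :
      ∑ i ∈ range j, r⁻¹ ^ i ≤ ∑ i ∈ range n, r⁻¹ ^ i :=
    sum_le_sum_of_subset_of_nonneg (range_subset_range.2 (mem_range.1 hj).le)
      fun i _ _ => by positivity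
  have : ∑ j ∈ range n, ∑ i ∈ range j, r⁻¹ ^ i ≤ n * ∑ i ∈ range n, r⁻¹ ^ i := by
    simpa using sum_le_sum hgeom_le
  unfold potential potentialStep
  rw [sum_sub_distrib, ← mul_sum]
  exact mul_nonneg (by positivity) (sub_nonneg.2 this)

end Potential

section RegularDigraph

variable {V : Type*} [Fintype V] [DecidableEq V] {E : V → V → Prop} [DecidableRel E]

lemma card_interedges_compl_comm {Δ : ℕ} (hout : ∀ v, #{w | E v w} = Δ)
    (hin : ∀ v, #{w | E w v} = Δ) (S : Finset V) :
    #(Rel.interedges E S Sᶜ) = #(Rel.interedges E Sᶜ S) := by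
  have h_out : #(Rel.interedges E S univ) = #S * Δ := by
    simp [Rel.card_interedges_eq_sum_left, hout]
  have h_in : #(Rel.interedges E univ S) = #S * Δ := by
    simp [Rel.card_interedges_eq_sum_right, hin]
  have := Rel.card_interedges_add_card_interedges_compl_right E S S
  have := Rel.card_interedges_add_card_interedges_compl_left E S S
  omega

lemma interedges_compl_nonempty (hE : ∀ u v, Relation.ReflTransGen E u v) {S : Finset V}
    (hS : S.Nonempty) (hS' : S ≠ univ) : (Rel.interedges E S Sᶜ).Nonempty := by
  obtain ⟨a, ha⟩ := hS
  obtain ⟨b, hb⟩ : ∃ b, b ∉ S := by simpa [eq_univ_iff_forall] using hS'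
  obtain ⟨u, hu, v, hv, huv⟩ := (hE a b).exists_rel_mem_not_mem (s := S) ha hb
  exact ⟨(u, v), Rel.mk_mem_interedges_iff.2 ⟨hu, mem_compl.2 hv, huv⟩⟩

end RegularDigraph

section Moran

variable {V : Type*} [Fintype V]

noncomputable def totalFitness (r : ℝ) (S : Finset V) : ℝ :=
  Fintype.card V + (r - 1) * #S

lemma totalFitness_le {r : ℝ} (hr : 1 ≤ r) (S : Finset V) :
    totalFitness r S ≤ r * Fintype.card V := by
  have : (#S : ℝ) ≤ Fintype.card V := by exact_mod_cast card_le_univ S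
  rw [totalFitness]
  nlinarith

variable [DecidableEq V] (E : V → V → Prop) [DecidableRel E]

noncomputable def moranRate (r : ℝ) (S : Finset V) (u : V) : ℝ :=
  (if u ∈ S then r else 1) / (totalFitness r S * #{w | E u w})

def moranStep (S : Finset V) (u v : V) : Finset V :=
  if u ∈ S then insert v S else S.erase v

lemma moranP_eq_sum (r : ℝ) (S S' : Finset V) :
    moranP E r S S' =
      ∑ u, ∑ v ∈ {v | E u v}, if S' = moranStep S u v then moranRate E r S u else 0 :=
  rfl

lemma sum_fitness (r : ℝ) (S : Finset V) :
    ∑ u, (if u ∈ S then r else 1) = totalFitness r S := by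
  rw [sum_ite, sum_const, sum_const, filter_mem_eq_inter, univ_inter, filter_not,
    filter_mem_eq_inter, univ_inter, card_sdiff_of_subset (subset_univ S), card_univ,
    totalFitness]
  simp only [nsmul_eq_mul, mul_one, Nat.cast_sub (card_le_univ S)]
  ring

variable {E}

lemma totalFitness_nonneg {r : ℝ} (hr : 0 ≤ r) (S : Finset V) : 0 ≤ totalFitness r S := by
  rw [← sum_fitness]
  exact sum_nonneg fun u _ => by split_ifs <;> positivity

lemma totalFitness_pos [Nonempty V] {r : ℝ} (hr : 0 < r) (S : Finset V) :
    0 < totalFitness r S := by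
  rw [← sum_fitness]
  exact sum_pos (fun u _ => by split_ifs <;> positivity) univ_nonempty

lemma moranRate_nonneg {r : ℝ} (hr : 0 ≤ r) (S : Finset V) (u : V) :
    0 ≤ moranRate E r S u := by
  have := totalFitness_nonneg hr S
  unfold moranRate
  split_ifs <;> positivity

lemma moranP_nonneg {r : ℝ} (hr : 0 ≤ r) (S S' : Finset V) : 0 ≤ moranP E r S S' := by
  rw [moranP_eq_sum]
  exact sum_nonneg fun u _ => sum_nonneg fun v _ => by
    split_ifs <;> [exact moranRate_nonneg hr S u; rfl]

lemma moranP_insert_pos {r : ℝ} (hr : 0 < r) {S : Finset V} {u v : V} (hu : u ∈ S)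
    (huv : E u v) : 0 < moranP E r S (insert v S) := by
  have : Nonempty V := ⟨u⟩
  have := totalFitness_pos hr S
  have hdeg : 0 < #{w | E u w} := card_pos.2 ⟨v, by simpa using huv⟩
  rw [moranP_eq_sum]
  refine sum_pos' (fun u _ => sum_nonneg fun v _ => ?_) ⟨u, mem_univ u, ?_⟩
  · split_ifs <;> [exact moranRate_nonneg hr.le S u; rfl]
  refine sum_pos' (fun v _ => ?_) ⟨v, by simpa using huv, ?_⟩
  · split_ifs <;> [exact moranRate_nonneg hr.le S u; rfl]
  rw [if_pos (by rw [moranStep, if_pos hu]), moranRate, if_pos hu]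
  positivity

variable (E)

lemma sum_moranP_mul (r : ℝ) (S : Finset V) (F : Finset V → ℝ) :
    ∑ S', moranP E r S S' * F S' =
      ∑ u, ∑ v ∈ {v | E u v}, moranRate E r S u * F (moranStep S u v) := by
  simp only [moranP_eq_sum, sum_mul, ite_mul, zero_mul]
  rw [sum_comm]
  refine sum_congr rfl fun u _ => ?_
  rw [sum_comm]
  simp [sum_ite_eq']

lemma sum_moranP [Nonempty V] {r : ℝ} (hr : 0 < r) (hdeg : ∀ u, #{w | E u w} ≠ 0)
    (S : Finset V) : ∑ S', moranP E r S S' = 1 := by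
  have hrow (u : V) : ∑ _v ∈ {v | E u v}, moranRate E r S u =
      (if u ∈ S then r else 1) / totalFitness r S := by
    have : (#{w | E u w} : ℝ) ≠ 0 := Nat.cast_ne_zero.2 (hdeg u)
    rw [sum_const, nsmul_eq_mul, moranRate]
    field_simp
  have := sum_moranP_mul E r S fun _ => 1
  simp only [mul_one] at this
  rw [this, sum_congr rfl fun u _ => hrow u, ← sum_div, sum_fitness,
    div_self (totalFitness_pos hr S).ne']

end Moran

section Drift

variable {V : Type*} [Fintype V] [DecidableEq V] {E : V → V → Prop} [DecidableRel E]

lemma sum_moranP_mul_card [Nonempty V] {r : ℝ} (hr : 0 < r) {Δ : ℕ} (hΔ : 0 < Δ)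
    (hout : ∀ v, #{w | E v w} = Δ) (S : Finset V) (g : ℕ → ℝ) :
    ∑ S', moranP E r S S' * g #S' = g #S +
      (r * #(Rel.interedges E S Sᶜ) * (g (#S + 1) - g #S) +
        #(Rel.interedges E Sᶜ S) * (g (#S - 1) - g #S)) / (totalFitness r S * Δ) := by
  have hstep (u v : V) : moranRate E r S u * (g #(moranStep S u v) - g #S) =
      (if u ∈ S ∧ v ∈ Sᶜ then r * (g (#S + 1) - g #S) / (totalFitness r S * Δ) else 0) +
      (if u ∈ Sᶜ ∧ v ∈ S then (g (#S - 1) - g #S) / (totalFitness r S * Δ) else 0) := by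
    by_cases hu : u ∈ S <;> by_cases hv : v ∈ S <;>
      simp only [moranRate, moranStep, hout, hu, hv, ↓reduceIte, mem_compl, not_true_eq_false,
        not_false_eq_true, and_true, and_false, and_self, add_zero, zero_add, insert_eq_of_mem,
        erase_eq_of_notMem, card_insert_of_notMem, card_erase_of_mem, sub_self, mul_zero] <;>
      ring
  calc ∑ S', moranP E r S S' * g #S'
      = g #S + ∑ S', moranP E r S S' * (g #S' - g #S) := by
        simp [mul_sub, sum_sub_distrib, ← sum_mul, sum_moranP E hr fun u => (hout u).trans_ne hΔ.ne']
    _ = g #S + ∑ u, ∑ v ∈ {v | E u v}, moranRate E r S u * (g #(moranStep S u v) - g #S) := by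
        rw [sum_moranP_mul E r S fun S' => g #S' - g #S]
    _ = _ := by
        simp only [hstep, sum_add_distrib, Rel.sum_sum_ite_mem_and_mem]
        ring

lemma sum_moranP_mul_potential_le [Nonempty V] {r : ℝ} (hr : 1 ≤ r) {Δ : ℕ} (hΔ : 0 < Δ)
    (hout : ∀ v, #{w | E v w} = Δ) (hin : ∀ v, #{w | E w v} = Δ)
    (hE : ∀ u v, Relation.ReflTransGen E u v) {S : Finset V} (hS : S.Nonempty)
    (hS' : S ≠ univ) :
    1 + ∑ S', moranP E r S S' * potential r (Fintype.card V) Δ #S' ≤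
      potential r (Fintype.card V) Δ #S := by
  obtain ⟨k, hk⟩ : ∃ k, #S = k + 1 := ⟨#S - 1, by have := hS.card_pos; omega⟩
  have hB : 1 ≤ (#(Rel.interedges E S Sᶜ) : ℝ) := by
    exact_mod_cast (interedges_compl_nonempty hE hS hS').card_pos
  have hr0 : 0 < r := zero_lt_one.trans_le hr
  rw [sum_moranP_mul_card hr0 hΔ hout, ← card_interedges_compl_comm hout hin, hk,
    Nat.add_sub_cancel]
  set n := Fintype.card V
  set B : ℝ := (#(Rel.interedges E S Sᶜ) : ℝ)
  have hWle : totalFitness r S ≤ r * n := totalFitness_le hr S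
  have hWΔ : 0 < totalFitness r S * Δ := mul_pos (totalFitness_pos hr0 S) (by exact_mod_cast hΔ)
  have hup := potential_succ_sub (r := r) n Δ (k + 1)
  have hdown := potential_succ_sub (r := r) n Δ k
  have hrec := potentialStep_succ n hr0.ne' k
  have hnum : r * B * (potential r n Δ (k + 2) - potential r n Δ (k + 1)) +
      B * (potential r n Δ k - potential r n Δ (k + 1)) = -(B * n * Δ * r) := by
    linear_combination r * B * hup - B * hdown + (B * n * Δ) * hrec
  have hloss : 1 ≤ B * n * Δ * r / (totalFitness r S * Δ) := by
    rw [le_div_iff₀ hWΔ]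
    calc 1 * (totalFitness r S * Δ) ≤ r * n * Δ := by
          rw [one_mul]; gcongr
      _ ≤ B * (r * n * Δ) := le_mul_of_one_le_left (by positivity) hB
      _ = B * n * Δ * r := by ring
  rw [hnum, neg_div]
  linarith

end Drift

lemma absorptionTime_le_potential {V : Type*} [Fintype V] [DecidableEq V] [Nonempty V]
    {E : V → V → Prop} [DecidableRel E] {Δ : ℕ} (hΔ : 0 < Δ) (hout : ∀ v, #{w | E v w} = Δ)
    (hin : ∀ v, #{w | E w v} = Δ) (hstrong : ∀ u v, Relation.ReflTransGen E u v) {r : ℝ}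
    (hr : 1 ≤ r) {T : Finset V → ℝ} (hT0 : T ∅ = 0) (hTn : T univ = 0)
    (hTrec : ∀ S : Finset V, S ≠ ∅ → S ≠ univ →
      T S = 1 + ∑ S' : Finset V, moranP E r S S' * T S') (S : Finset V) :
    T S ≤ potential r (Fintype.card V) Δ #S := by
  have hr0 : 0 < r := zero_lt_one.trans_le hr
  refine sub_nonpos.1 <| le_of_forall_le_sum_mul (moranP E r) (fun S => S ≠ ∅ ∧ S ≠ univ)
    card (fun S => T S - potential r (Fintype.card V) Δ #S) 0 ?_ ?_ ?_ ?_ S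
  · exact fun S _ => ⟨moranP_nonneg hr0.le S, sum_moranP E hr0
      (fun u => (hout u).trans_ne hΔ.ne') S⟩
  · rintro S ⟨hS, hS'⟩
    obtain ⟨⟨u, v⟩, huv⟩ := interedges_compl_nonempty hstrong (nonempty_iff_ne_empty.2 hS) hS'
    rw [Rel.mk_mem_interedges_iff, mem_compl] at huv
    exact ⟨insert v S, moranP_insert_pos hr0 huv.1 huv.2.2,
      card_lt_card (ssubset_insert huv.2.1)⟩
  · rintro S ⟨hS, hS'⟩
    have := sum_moranP_mul_potential_le hr hΔ hout hin hstrong (nonempty_iff_ne_empty.2 hS) hS'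
    rw [hTrec S hS hS']
    simp only [mul_sub, sum_sub_distrib]
    linarith
  · intro S hS
    obtain rfl | rfl : S = ∅ ∨ S = univ := by tauto
    · simp [hT0]
    · simpa [hTn] using potential_self_nonneg (Fintype.card V) Δ hr0.le

theorem stmt_10_general {V : Type*} [Fintype V] [DecidableEq V] [Nonempty V]
    (E : V → V → Prop) [DecidableRel E]
    (Δ : ℕ) (hΔ : 1 ≤ Δ)
    (hout : ∀ v : V, (univ.filter (fun w => E v w)).card = Δ)
    (hin : ∀ v : V, (univ.filter (fun w => E w v)).card = Δ)
    (hstrong : ∀ u v : V, Relation.ReflTransGen E u v)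
    (r : ℝ) (hr : 1 < r)
    (n : ℕ) (hn : n = Fintype.card V)
    (T : Finset V → ℝ)
    (hT0 : T ∅ = 0) (hTn : T univ = 0)
    (hTrec : ∀ S : Finset V, S ≠ ∅ → S ≠ univ →
      T S = 1 + ∑ S' : Finset V, moranP E r S S' * T S') :
    (1 / (n : ℝ)) * ∑ v : V, T {v} ≤ (n : ℝ) ^ 2 * (Δ : ℝ) := by
  subst hn
  have hT_le (v : V) : T {v} ≤ (Fintype.card V : ℝ) ^ 2 * Δ := by
    simpa [potential_one] using
      absorptionTime_le_potential hΔ hout hin hstrong hr.le hT0 hTn hTrec {v}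
  calc (1 / (Fintype.card V : ℝ)) * ∑ v : V, T {v}
      ≤ (1 / (Fintype.card V : ℝ)) * ∑ _v : V, (Fintype.card V : ℝ) ^ 2 * Δ := by
        gcongr with v
        exact hT_le v
    _ = (Fintype.card V : ℝ) ^ 2 * Δ := by
        rw [sum_const, card_univ, nsmul_eq_mul]
        field_simp

/-- The expected absorption time of the Moran process with mutant fitness
`r > 1` on a strongly connected `Δ`-regular `n`-vertex digraph, started from a
uniformly random single mutant, is at most `n²Δ`.  Here `T` is the
expected-absorption-time function, characterized as the solution of the
one-step recurrence. -/
theorem stmt_10 {V : Type*} [Fintype V] [DecidableEq V] [Nonempty V]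
    (E : V → V → Prop) [DecidableRel E]
    (Δ : ℕ) (hΔ : 1 ≤ Δ)
    (hout : ∀ v : V, (univ.filter (fun w => E v w)).card = Δ)
    (hin : ∀ v : V, (univ.filter (fun w => E w v)).card = Δ)
    (hstrong : ∀ u v : V, Relation.ReflTransGen E u v)
    (r : ℝ) (hr : 1 < r)
    (n : ℕ) (hn : n = Fintype.card V) (hn2 : 2 ≤ n)
    (T : Finset V → ℝ)
    (hT0 : T ∅ = 0) (hTn : T univ = 0)
    (hTrec : ∀ S : Finset V, S ≠ ∅ → S ≠ univ →
      T S = 1 + ∑ S' : Finset V, moranP E r S S' * T S') :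
    (1 / (n : ℝ)) * ∑ v : V, T {v} ≤ (n : ℝ) ^ 2 * (Δ : ℝ) :=
  stmt_10_general E Δ hΔ hout hin hstrong r hr n hn T hT0 hTn hTrec
end

section
/- For any strongly connected digraph G, the overall fixation probability f_{G,r} = (1/|V|)·Σ_{v∈V} f_{G,r}({v}) is monotone non-decreasing in the mutant fitness r: if 0 < r ≤ r′ then f_{G,r} ≤ f_{G,r′}. -/
open Finset

/-!
Run the Moran process in continuous time, jumping along each edge `(u, v)` at rate
`fitness u / outdeg u`. This does not change the fixation probabilities, which are exactly the
functions annihilated by its generator, and these obey a minimum principle because an absorbing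
state is reachable from every state. Coupling two copies started from `A ⊆ B` so that they use the
same edges and the clock of each vertex rings in both copies as often as possible keeps the first
copy inside the second; the minimum principle for `f B - f A` on this pair process shows that the
fixation probability `f` at fitness `r` is monotone in the mutant set. Raising the fitness to `r'`
only speeds up the jumps that add a mutant, so by monotonicity the `r'`-generator of `f` is
nonnegative, and the minimum principle for `g - f` gives `f ≤ g`.
-/

namespace JumpProcess

variable {X ι : Type*} [Fintype ι]

def generator (q : X → ι → ℝ) (t : X → ι → X) (h : X → ℝ) (x : X) : ℝ :=
  ∑ i, q x i * (h (t x i) - h x)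

def Step (q : X → ι → ℝ) (t : X → ι → X) (x y : X) : Prop :=
  ∃ i, 0 < q x i ∧ t x i = y

variable {q : X → ι → ℝ} {t : X → ι → X}

lemma generator_sub (g h : X → ℝ) (x : X) :
    generator q t (fun y => g y - h y) x = generator q t g x - generator q t h x := by
  simp only [generator, ← sum_sub_distrib]
  exact sum_congr rfl fun i _ => by ring

lemma generator_const_sub (c : ℝ) (h : X → ℝ) (x : X) :
    generator q t (fun y => c - h y) x = -generator q t h x := by
  simp only [generator, ← sum_neg_distrib]
  exact sum_congr rfl fun i _ => by ring

theorem nonneg_of_generator_nonpos [Finite X] {h : X → ℝ} {S : Set X}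
    (hq : ∀ x ∈ S, ∀ i, 0 ≤ q x i) (hS : ∀ x ∈ S, ∀ i, 0 < q x i → t x i ∈ S)
    (hh : ∀ x ∈ S, generator q t h x ≤ 0)
    (hreach : ∀ x ∈ S, ∃ y, Relation.ReflTransGen (Step q t) x y ∧ 0 ≤ h y) :
    ∀ x ∈ S, 0 ≤ h x := by
  intro x₀ hx₀
  obtain ⟨z, hzS, hz⟩ := S.exists_min_image h S.toFinite ⟨x₀, hx₀⟩
  have step : ∀ x y, x ∈ S → h x = h z → Step q t x y → y ∈ S ∧ h y = h z := by
    rintro x _ hx hxz ⟨i, hi, rfl⟩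
    refine ⟨hS x hx i hi, (hz _ (hS x hx i hi)).antisymm' ?_⟩
    by_contra! hlt
    have hterm : ∀ j, 0 ≤ q x j * (h (t x j) - h x) := fun j => by
      rcases (hq x hx j).eq_or_lt with hj | hj
      · simp [← hj]
      · exact mul_nonneg hj.le (by linarith [hz _ (hS x hx j hj)])
    have : 0 < generator q t h x :=
      sum_pos' (fun j _ => hterm j) ⟨i, mem_univ i, mul_pos hi (by linarith)⟩
    linarith [hh x hx]
  obtain ⟨y, hzy, hy⟩ := hreach z hzS
  have hyz : y ∈ S ∧ h y = h z := by
    clear hy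
    induction hzy with
    | refl => exact ⟨hzS, rfl⟩
    | tail _ hbc ih => exact step _ _ ih.1 ih.2 hbc
  linarith [hz x₀ hx₀]

/-- Two exponential clocks of rates `x` and `y`, coupled so that they ring together as often as
possible: `coupledRate x y a b` is the rate at which clock 1 rings iff `a` and clock 2 iff `b`. -/
def coupledRate (x y : ℝ) : Bool → Bool → ℝ
  | true, true => min x y
  | true, false => x - min x y
  | false, true => y - min x y
  | false, false => 0

lemma coupledRate_nonneg {x y : ℝ} (hx : 0 ≤ x) (hy : 0 ≤ y) (a b : Bool) :
    0 ≤ coupledRate x y a b := by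
  cases a <;> cases b <;> simp [coupledRate, hx, hy]

lemma lt_of_coupledRate_true_false_pos {x y : ℝ} (h : 0 < coupledRate x y true false) :
    y < x := by
  simp only [coupledRate, sub_pos, min_lt_iff, lt_self_iff_false, false_or] at h
  exact h

lemma lt_of_coupledRate_false_true_pos {x y : ℝ} (h : 0 < coupledRate x y false true) :
    x < y := by
  simp only [coupledRate, sub_pos, min_lt_iff, lt_self_iff_false, or_false] at h
  exact h

end JumpProcess

lemma Relation.ReflTransGen.exists_mem_rel_not_mem {α : Type*} {E : α → α → Prop} {a b : α}
    (hab : Relation.ReflTransGen E a b) {A : Finset α} (ha : a ∈ A) (hb : b ∉ A) :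
    ∃ u ∈ A, ∃ v ∉ A, E u v := by
  induction hab with
  | refl => exact absurd ha hb
  | @tail c d _ hcd ih =>
    by_cases hc : c ∈ A
    · exact ⟨c, hc, d, hb, hcd⟩
    · exact ih hc

lemma exists_reflTransGen_eq_univ {V α : Type*} [Fintype V] [DecidableEq V]
    {R : α → α → Prop} (F : α → Finset V)
    (hgrow : ∀ x, (F x).Nonempty → F x ≠ univ → ∃ y, R x y ∧ F x ⊂ F y) :
    ∀ x, (F x).Nonempty → ∃ y, Relation.ReflTransGen R x y ∧ F y = univ := by
  intro x
  induction hn : #(F x)ᶜ using Nat.strong_induction_on generalizing x with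
  | _ n ih =>
  intro hx
  by_cases hu : F x = univ
  · exact ⟨x, .refl, hu⟩
  obtain ⟨y, hxy, hlt⟩ := hgrow x hx hu
  obtain ⟨z, hyz, hz⟩ := ih _ (hn ▸ card_lt_card (compl_ssubset_compl.2 hlt)) y rfl
    (hx.mono hlt.subset)
  exact ⟨z, .head hxy hyz, hz⟩

lemma exists_mem_rel_not_mem_of_ne_univ {V : Type*} [Fintype V] {E : V → V → Prop}
    (hstrong : ∀ u v, Relation.ReflTransGen E u v) {A : Finset V} (hA : A.Nonempty)
    (hA' : A ≠ univ) : ∃ u ∈ A, ∃ v ∉ A, E u v := by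
  obtain ⟨a, ha⟩ := hA
  obtain ⟨b, hb⟩ := not_forall.1 (mt eq_univ_of_forall hA')
  exact (hstrong a b).exists_mem_rel_not_mem ha hb

lemma exists_rel_of_nontrivial {V : Type*} [Nontrivial V] {E : V → V → Prop}
    (hstrong : ∀ u v, Relation.ReflTransGen E u v) (u : V) : ∃ v, E u v := by
  classical
  obtain ⟨w, hw⟩ := exists_ne u
  obtain ⟨u', hu', v, -, huv⟩ :=
    (hstrong u w).exists_mem_rel_not_mem (mem_singleton_self u) (by simpa using hw)
  exact ⟨v, mem_singleton.1 hu' ▸ huv⟩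

namespace Moran

open JumpProcess

section Moves

variable {V : Type*} [DecidableEq V]

def move (A : Finset V) (uv : V × V) : Finset V :=
  if uv.1 ∈ A then insert uv.2 A else A.erase uv.2

def fitness (r : ℝ) (A : Finset V) (u : V) : ℝ := if u ∈ A then r else 1

lemma move_empty (uv : V × V) : move ∅ uv = ∅ := by simp [move]

lemma move_mono {A B : Finset V} (h : A ⊆ B) (uv : V × V) : move A uv ⊆ move B uv := by
  unfold move
  split_ifs with hA hB hB
  · exact insert_subset_insert _ h
  · exact absurd (h hA) hB
  · exact (erase_subset _ _).trans (h.trans (subset_insert _ _))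
  · exact erase_subset_erase _ h

lemma fitness_pos {r : ℝ} (hr : 0 < r) (A : Finset V) (u : V) : 0 < fitness r A u := by
  unfold fitness; split_ifs <;> positivity

end Moves

variable {V : Type*} [Fintype V]

lemma card_add_sub_one_mul_card_pos {r : ℝ} (hr : 0 < r) {A : Finset V} (hA : A.Nonempty) :
    0 < (Fintype.card V : ℝ) + (r - 1) * #A := by
  have hle : (#A : ℝ) ≤ Fintype.card V := by exact_mod_cast card_le_univ A
  have hpos : (0 : ℝ) < #A := by exact_mod_cast hA.card_pos
  nlinarith

variable (E : V → V → Prop) [DecidableRel E]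

noncomputable def edgeWeight (uv : V × V) : ℝ :=
  if E uv.1 uv.2 then ((#{w | E uv.1 w} : ℕ) : ℝ)⁻¹ else 0

variable {E}

lemma edgeWeight_nonneg (uv : V × V) : 0 ≤ edgeWeight E uv := by
  unfold edgeWeight; split_ifs <;> positivity

lemma edgeWeight_pos {u v : V} (huv : E u v) : 0 < edgeWeight E (u, v) := by
  have : 0 < #{w | E u w} := card_pos.2 ⟨v, by simpa using huv⟩
  simp only [edgeWeight, if_pos huv]
  positivity

lemma sum_edgeWeight {u : V} (hu : ∃ v, E u v) : ∑ v, edgeWeight E (u, v) = 1 := by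
  obtain ⟨v, huv⟩ := hu
  have : 0 < #{w | E u w} := card_pos.2 ⟨v, by simpa using huv⟩
  simp only [edgeWeight, ← sum_filter, sum_const, nsmul_eq_mul]
  exact mul_inv_cancel₀ (by positivity)

variable [DecidableEq V]

lemma move_univ (uv : V × V) : move univ uv = univ := by simp [move]

lemma sum_fitness (r : ℝ) (A : Finset V) :
    ∑ u, fitness r A u = Fintype.card V + (r - 1) * #A := by
  have h : ∀ u, fitness r A u = 1 + (r - 1) * if u ∈ A then 1 else 0 := fun u => by
    unfold fitness; split_ifs <;> ring
  simp [h, sum_add_distrib]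
  ring

variable (E)

/-- Jump rate of the Moran process from `A` to `move A (u, v)`: the process of `moranP`
without the normalisation by the total fitness, which does not change harmonic functions. -/
noncomputable def rate (r : ℝ) (A : Finset V) (uv : V × V) : ℝ :=
  fitness r A uv.1 * edgeWeight E uv

variable {E}

lemma sum_rate (hE : ∀ u, ∃ v, E u v) (r : ℝ) (A : Finset V) :
    ∑ uv, rate E r A uv = Fintype.card V + (r - 1) * #A := by
  simp only [rate, Fintype.sum_prod_type, ← mul_sum, sum_edgeWeight (hE _), mul_one,
    sum_fitness]

lemma sum_moranP_mul (r : ℝ) (A : Finset V) (h : Finset V → ℝ) :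
    ∑ B, moranP E r A B * h B =
      (∑ uv, rate E r A uv * h (move A uv)) / (Fintype.card V + (r - 1) * #A) := by
  simp only [moranP, sum_mul, ite_mul, zero_mul]
  rw [sum_comm]
  simp only [Fintype.sum_prod_type, sum_div]
  refine sum_congr rfl fun u _ => ?_
  rw [sum_comm, sum_filter]
  refine sum_congr rfl fun v _ => ?_
  simp only [sum_ite_eq', mem_univ, if_true]
  unfold rate edgeWeight fitness move
  split_ifs <;> simp [div_eq_mul_inv, mul_comm, mul_left_comm, mul_assoc]

variable (E) in
structure IsFixationProb (r : ℝ) (f : Finset V → ℝ) : Prop where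
  apply_univ : f univ = 1
  apply_empty : f ∅ = 0
  eq_sum_moranP : ∀ A : Finset V, A ≠ ∅ → A ≠ univ → f A = ∑ B, moranP E r A B * f B

variable {r r' : ℝ}

lemma rate_nonneg (hr : 0 < r) (A : Finset V) (uv : V × V) : 0 ≤ rate E r A uv :=
  mul_nonneg (fitness_pos hr A uv.1).le (edgeWeight_nonneg uv)

lemma IsFixationProb.generator_eq_zero (hE : ∀ u, ∃ v, E u v) (hr : 0 < r)
    {f : Finset V → ℝ} (hf : IsFixationProb E r f) (A : Finset V) :
    generator (rate E r) move f A = 0 := by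
  by_cases h0 : A = ∅
  · simp [generator, h0, move_empty]
  by_cases h1 : A = univ
  · simp [generator, h1, move_univ]
  have hW := card_add_sub_one_mul_card_pos hr (nonempty_iff_ne_empty.2 h0)
  have hrec := hf.eq_sum_moranP A h0 h1
  rw [sum_moranP_mul, eq_div_iff hW.ne', ← sum_rate hE r A, mul_comm, sum_mul] at hrec
  simp only [generator, mul_sub, sum_sub_distrib, hrec, sub_self]

lemma reflTransGen_step_univ (hstrong : ∀ u v, Relation.ReflTransGen E u v) (hr : 0 < r)
    {A : Finset V} (hA : A.Nonempty) :
    Relation.ReflTransGen (Step (rate E r) move) A univ := by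
  have hgrow (B : Finset V) (hB : B.Nonempty) (hB' : B ≠ univ) :
      ∃ C, Step (rate E r) move B C ∧ B ⊂ C := by
    obtain ⟨u, hu, v, hv, huv⟩ := exists_mem_rel_not_mem_of_ne_univ hstrong hB hB'
    refine ⟨insert v B, ⟨(u, v), ?_, if_pos hu⟩, ssubset_insert hv⟩
    exact mul_pos (fitness_pos hr B u) (edgeWeight_pos huv)
  obtain ⟨B, hAB, rfl⟩ := exists_reflTransGen_eq_univ id hgrow A hA
  exact hAB

lemma nonneg_of_generator_nonpos (hstrong : ∀ u v, Relation.ReflTransGen E u v) (hr : 0 < r)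
    {h : Finset V → ℝ} (hgen : ∀ A, generator (rate E r) move h A ≤ 0) (h0 : 0 ≤ h ∅)
    (h1 : 0 ≤ h univ) (A : Finset V) : 0 ≤ h A := by
  refine JumpProcess.nonneg_of_generator_nonpos (S := Set.univ)
    (fun A _ => rate_nonneg hr A) (fun _ _ _ _ => trivial) (fun A _ => hgen A)
    (fun A _ => ?_) A trivial
  rcases A.eq_empty_or_nonempty with rfl | hA
  · exact ⟨∅, .refl, h0⟩
  · exact ⟨univ, reflTransGen_step_univ hstrong hr hA, h1⟩

lemma IsFixationProb.le_one (hE : ∀ u, ∃ v, E u v)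
    (hstrong : ∀ u v, Relation.ReflTransGen E u v) (hr : 0 < r) {f : Finset V → ℝ}
    (hf : IsFixationProb E r f) (A : Finset V) : f A ≤ 1 :=
  sub_nonneg.1 <| nonneg_of_generator_nonpos hstrong hr (h := fun A => 1 - f A)
    (fun A => by rw [generator_const_sub, hf.generator_eq_zero hE hr, neg_zero])
    (by simp [hf.apply_empty]) (by simp [hf.apply_univ]) A

variable (E) in
/-- The Moran processes from `p.1` and `p.2`, run with the same choice of edge `(u, v)` and with
the clocks of `u` in the two processes coupled by `coupledRate`. -/
noncomputable def pairRate (r : ℝ) (p : Finset V × Finset V) (i : (V × V) × Bool × Bool) :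
    ℝ :=
  coupledRate (fitness r p.1 i.1.1) (fitness r p.2 i.1.1) i.2.1 i.2.2 * edgeWeight E i.1

def pairMove (p : Finset V × Finset V) (i : (V × V) × Bool × Bool) : Finset V × Finset V :=
  (if i.2.1 then move p.1 i.1 else p.1, if i.2.2 then move p.2 i.1 else p.2)

lemma pairRate_nonneg (hr : 0 < r) (p : Finset V × Finset V) (i : (V × V) × Bool × Bool) :
    0 ≤ pairRate E r p i :=
  mul_nonneg (coupledRate_nonneg (fitness_pos hr _ _).le (fitness_pos hr _ _).le _ _)
    (edgeWeight_nonneg _)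

lemma generator_pairRate (F : Finset V → ℝ) (p : Finset V × Finset V) :
    generator (pairRate E r) pairMove (fun q => F q.2 - F q.1) p =
      generator (rate E r) move F p.2 - generator (rate E r) move F p.1 := by
  simp only [generator, Fintype.sum_prod_type, ← sum_sub_distrib]
  refine sum_congr rfl fun u _ => sum_congr rfl fun v _ => ?_
  simp only [pairRate, pairMove, rate, Fintype.sum_bool, coupledRate, Bool.false_eq_true,
    ↓reduceIte]
  ring

lemma pairMove_subset {p : Finset V × Finset V} (hp : p.1 ⊆ p.2) {i : (V × V) × Bool × Bool}
    (hi : 0 < pairRate E r p i) : (pairMove p i).1 ⊆ (pairMove p i).2 := by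
  obtain ⟨A, B⟩ := p
  obtain ⟨⟨u, v⟩, a, b⟩ := i
  have hc := pos_of_mul_pos_left hi (edgeWeight_nonneg _)
  cases a <;> cases b <;> simp only [pairMove, Bool.false_eq_true, ↓reduceIte] at hc ⊢
  · exact hp
  · have hlt := lt_of_coupledRate_false_true_pos hc
    have hu : u ∈ B := by
      by_contra hu
      simp [fitness, hu, mt (@hp u) hu] at hlt
    simp only [move, if_pos hu]
    exact hp.trans (subset_insert v B)
  · have hlt := lt_of_coupledRate_true_false_pos hc
    have hu : u ∉ A := fun hu => by simp [fitness, hu, hp hu] at hlt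
    simp only [move, if_neg hu]
    exact (erase_subset v A).trans hp
  · exact move_mono hp _

lemma exists_reflTransGen_pairStep_snd_eq_univ (hstrong : ∀ u v, Relation.ReflTransGen E u v)
    (hr : 0 < r) {p : Finset V × Finset V} (hp : p.2.Nonempty) :
    ∃ q, Relation.ReflTransGen (Step (pairRate E r) pairMove) p q ∧ q.2 = univ := by
  refine exists_reflTransGen_eq_univ Prod.snd (fun p hp hp' => ?_) p hp
  obtain ⟨u, hu, v, hv, huv⟩ := exists_mem_rel_not_mem_of_ne_univ hstrong hp hp'
  refine ⟨_, ⟨((u, v), true, true), ?_, rfl⟩, ?_⟩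
  · exact mul_pos (lt_min (fitness_pos hr _ _) (fitness_pos hr _ _)) (edgeWeight_pos huv)
  · simp only [pairMove, ↓reduceIte, move, if_pos hu]
    exact ssubset_insert hv

theorem IsFixationProb.monotone (hE : ∀ u, ∃ v, E u v)
    (hstrong : ∀ u v, Relation.ReflTransGen E u v) (hr : 0 < r) {f : Finset V → ℝ}
    (hf : IsFixationProb E r f) : Monotone f := by
  intro A B hAB
  refine sub_nonneg.1 <| JumpProcess.nonneg_of_generator_nonpos
    (q := pairRate E r) (t := pairMove) (S := {p | p.1 ⊆ p.2}) (h := fun p => f p.2 - f p.1)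
    (fun p _ => pairRate_nonneg hr p) (fun p hp i hi => pairMove_subset hp hi)
    (fun p _ => ?_) (fun p hp => ?_) (A, B) hAB
  · rw [generator_pairRate, hf.generator_eq_zero hE hr, hf.generator_eq_zero hE hr, sub_self]
  rcases p.2.eq_empty_or_nonempty with h2 | h2
  · have h1 : p.1 = ∅ := subset_empty.1 (h2 ▸ hp)
    exact ⟨p, .refl, by simp [h1, h2]⟩
  · obtain ⟨q, hpq, hq⟩ := exists_reflTransGen_pairStep_snd_eq_univ hstrong hr h2
    exact ⟨q, hpq, by simpa [hq, hf.apply_univ] using hf.le_one hE hstrong hr q.1⟩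

lemma generator_rate_le_of_le (hrr : r ≤ r') {f : Finset V → ℝ} (hf : Monotone f)
    (A : Finset V) : generator (rate E r) move f A ≤ generator (rate E r') move f A := by
  refine sum_le_sum fun uv _ => ?_
  by_cases hu : uv.1 ∈ A
  · have : f A ≤ f (move A uv) := hf (by simp [move, hu, subset_insert])
    simp only [rate, fitness, if_pos hu]
    exact mul_le_mul_of_nonneg_right (mul_le_mul_of_nonneg_right hrr (edgeWeight_nonneg uv))
      (sub_nonneg.2 this)
  · simp [rate, fitness, hu]

theorem IsFixationProb.le_of_le (hE : ∀ u, ∃ v, E u v)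
    (hstrong : ∀ u v, Relation.ReflTransGen E u v) (hr : 0 < r) (hrr : r ≤ r')
    {f g : Finset V → ℝ} (hf : IsFixationProb E r f) (hg : IsFixationProb E r' g)
    (A : Finset V) : f A ≤ g A := by
  have hr' := hr.trans_le hrr
  refine sub_nonneg.1 <| nonneg_of_generator_nonpos hstrong hr' (h := fun A => g A - f A)
    (fun A => ?_) (by simp [hf.apply_empty, hg.apply_empty])
    (by simp [hf.apply_univ, hg.apply_univ]) A
  rw [generator_sub, hg.generator_eq_zero hE hr', zero_sub, neg_nonpos,
    ← hf.generator_eq_zero hE hr A]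
  exact generator_rate_le_of_le hrr (hf.monotone hE hstrong hr) A

end Moran

open Moran in
theorem stmt_16_general {V : Type*} [Fintype V] [DecidableEq V]
    (E : V → V → Prop) [DecidableRel E]
    (hstrong : ∀ u v : V, Relation.ReflTransGen E u v)
    (r r' : ℝ) (hr : 0 < r) (hrr : r ≤ r')
    (f g : Finset V → ℝ)
    (hf1 : f univ = 1) (hf0 : f ∅ = 0)
    (hfrec : ∀ A : Finset V, A ≠ ∅ → A ≠ univ →
      f A = ∑ B : Finset V, moranP E r A B * f B)
    (hg1 : g univ = 1) (hg0 : g ∅ = 0)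
    (hgrec : ∀ A : Finset V, A ≠ ∅ → A ≠ univ →
      g A = ∑ B : Finset V, moranP E r' A B * g B) :
    (1 / (Fintype.card V : ℝ)) * ∑ v : V, f {v} ≤
      (1 / (Fintype.card V : ℝ)) * ∑ v : V, g {v} := by
  rcases subsingleton_or_nontrivial V with hV | hV
  · have hsingleton (v : V) : ({v} : Finset V) = univ :=
      eq_univ_of_forall fun w => mem_singleton.2 (Subsingleton.elim w v)
    simp [hsingleton, hf1, hg1]
  have hle := IsFixationProb.le_of_le (exists_rel_of_nontrivial hstrong) hstrong hr hrr
    ⟨hf1, hf0, hfrec⟩ ⟨hg1, hg0, hgrec⟩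
  gcongr with v
  exact hle {v}

/-- Monotonicity of the overall fixation probability
`f_{G,r} = (1/|V|)·Σ_v f_{G,r}({v})` in the mutant fitness `r`, for any
strongly connected digraph `G`: if `0 < r ≤ r'` then `f_{G,r} ≤ f_{G,r'}`.
The fixation probabilities `f` (for fitness `r`) and `g` (for fitness `r'`)
are characterized as the solutions of the harmonic one-step recurrence with
boundary values `1` at the all-mutant state and `0` at the empty state. -/
theorem stmt_16 {V : Type*} [Fintype V] [DecidableEq V] [Nonempty V]
    (E : V → V → Prop) [DecidableRel E]
    (hstrong : ∀ u v : V, Relation.ReflTransGen E u v)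
    (r r' : ℝ) (hr : 0 < r) (hrr : r ≤ r')
    (f g : Finset V → ℝ)
    (hf1 : f univ = 1) (hf0 : f ∅ = 0)
    (hfrec : ∀ A : Finset V, A ≠ ∅ → A ≠ univ →
      f A = ∑ B : Finset V, moranP E r A B * f B)
    (hg1 : g univ = 1) (hg0 : g ∅ = 0)
    (hgrec : ∀ A : Finset V, A ≠ ∅ → A ≠ univ →
      g A = ∑ B : Finset V, moranP E r' A B * g B) :
    (1 / (Fintype.card V : ℝ)) * ∑ v : V, f {v} ≤
      (1 / (Fintype.card V : ℝ)) * ∑ v : V, g {v} :=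
  stmt_16_general E hstrong r r' hr hrr f g hf1 hf0 hfrec hg1 hg0 hgrec
end
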